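/- Let K be the closed unit disc in ℂ. There is no entire function Φ : ℂ → ℂ with the following property: for every orthogonally additive continuous polynomial P of degree two on C(K) (that is, P = P₁ + P₂ where P_j is an orthogonally additive continuous j-homogeneous polynomial for j = 1, 2) there exists a complex regular Borel measure μ on K such that P(x) = ∫_K Φ(x(t)) dμ(t) for all x ∈ C(K). -/

import Mathlib

open MeasureTheory Filter Topology

/-- The closed unit disc in `ℂ`, as a compact Hausdorff space. -/
abbrev DiscK : Type := ↥(Metric.closedBall (0 : ℂ) 1)

instance : CompactSpace DiscK := isCompact_iff_compactSpace.mp (isCompact_closedBall 0 1)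

/-- `f` is orthogonally additive when it is additive on orthogonal pairs. -/
def IsOrthAdd (f : C(DiscK, ℂ) → ℂ) : Prop :=
  ∀ x y : C(DiscK, ℂ), x * y = 0 → f (x + y) = f x + f y

/-- `P` is a continuous `k`-homogeneous polynomial on `C(DiscK, ℂ)`. -/
def IsHomogPoly (k : ℕ) (P : C(DiscK, ℂ) → ℂ) : Prop :=
  ∃ M : ContinuousMultilinearMap ℂ (fun _ : Fin k => C(DiscK, ℂ)) ℂ,
    ∀ x : C(DiscK, ℂ), P x = M (fun _ => x)

/-!
Evaluating at a point `t`, `x ↦ x t` and `x ↦ (x t)²` are orthogonally additive polynomials of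
degree one and two. If both were of the form `x ↦ ∫ Φ ∘ x · w dμ`, testing on the constant
functions `c` would give `c = Φ c · A` and `c² = Φ c · B` for fixed scalars `A`, `B`, so that
`Φ` would be both linear and quadratic; `c = 1, 2` already rule this out.
-/

lemma isHomogPoly_zero (k : ℕ) : IsHomogPoly k 0 :=
  ⟨0, fun _ => rfl⟩

lemma isOrthAdd_zero : IsOrthAdd 0 := by
  intro x y _
  simp

lemma isHomogPoly_eval_pow (k : ℕ) (t : DiscK) : IsHomogPoly k (fun x => x t ^ k) := by
  refine ⟨(ContinuousMultilinearMap.mkPiAlgebra ℂ (Fin k) ℂ).compContinuousLinearMap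
    (fun _ => ContinuousMap.evalCLM ℂ t), fun x => ?_⟩
  simp

lemma isOrthAdd_eval_pow {k : ℕ} (hk : k ≠ 0) (t : DiscK) : IsOrthAdd (fun x => x t ^ k) := by
  intro x y hxy
  have : x t * y t = 0 := by simpa using DFunLike.congr_fun hxy t
  rcases mul_eq_zero.mp this with hx | hy
  · simp [hx, hk]
  · simp [hy, hk]

lemma apply_const_of_eq_integral {X : Type*} [TopologicalSpace X] [MeasurableSpace X]
    {P : C(X, ℂ) → ℂ} {Φ : ℂ → ℂ} {μ : Measure X} {w : X → ℂ}
    (h : ∀ x : C(X, ℂ), P x = ∫ t, Φ (x t) * w t ∂μ) (c : ℂ) :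
    P (ContinuousMap.const X c) = Φ c * ∫ t, w t ∂μ := by
  simpa [integral_const_mul] using h (ContinuousMap.const X c)

lemma not_forall_eq_mul_and_sq_eq_mul (Φ : ℂ → ℂ) (A B : ℂ) :
    ¬ ((∀ c, c = Φ c * A) ∧ ∀ c, c ^ 2 = Φ c * B) := by
  rintro ⟨hlin, hsq⟩
  have hAB (c : ℂ) : c * B = c ^ 2 * A := by linear_combination B * hlin c - A * hsq c
  have hA : A = 0 := by linear_combination (2 * hAB 1 - hAB 2) / 2
  simpa [hA] using hlin 1

/-- There is no entire function `Φ : ℂ → ℂ` such that every orthogonally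
additive continuous polynomial `P = P₁ + P₂` of degree two on `C(K)` (`K` the
closed unit disc) is of the form `P x = ∫_K Φ(x(t)) dμ(t)` for some complex
regular Borel measure `μ` on `K` (encoded in polar form `w · μ` with `μ`
finite positive regular and `w` unimodular). -/
theorem no_universal_entire_factorization :
    ¬ ∃ Φ : ℂ → ℂ, Differentiable ℂ Φ ∧
      ∀ P₁ P₂ : C(DiscK, ℂ) → ℂ,
        IsHomogPoly 1 P₁ → IsOrthAdd P₁ → IsHomogPoly 2 P₂ → IsOrthAdd P₂ →
        ∃ (μ : Measure DiscK) (w : DiscK → ℂ),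
          IsFiniteMeasure μ ∧ μ.Regular ∧ Measurable w ∧ (∀ t, ‖w t‖ = 1) ∧
          ∀ x : C(DiscK, ℂ), P₁ x + P₂ x = ∫ t, Φ (x t) * w t ∂μ := by
  rintro ⟨Φ, -, hΦ⟩
  let t : DiscK := ⟨0, by simp⟩
  obtain ⟨μ, w, -, -, -, -, hlin⟩ := hΦ (fun x => x t ^ 1) 0
    (isHomogPoly_eval_pow 1 t) (isOrthAdd_eval_pow one_ne_zero t) (isHomogPoly_zero 2)
    isOrthAdd_zero
  obtain ⟨ν, v, -, -, -, -, hsq⟩ := hΦ 0 (fun x => x t ^ 2)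
    (isHomogPoly_zero 1) isOrthAdd_zero (isHomogPoly_eval_pow 2 t)
    (isOrthAdd_eval_pow two_ne_zero t)
  refine not_forall_eq_mul_and_sq_eq_mul Φ (∫ s, w s ∂μ) (∫ s, v s ∂ν) ⟨fun c => ?_, fun c => ?_⟩
  · simpa using apply_const_of_eq_integral hlin c
  · simpa using apply_const_of_eq_integral hsq c
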